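/- arXiv:1304.1996 — 2 statements merged into one kernel-verified Lean document; each statement's English description precedes it below -/
import Mathlib

section
/- Let d ≥ 2 and let x_d be the unique root of x^d - x^{d-1} - 1 in (1, ∞). Then the sequence (x_d) tends to 1 as d → ∞. -/
/-!
With `y = x_d` and `n = d - 1`, the equation reads `y ^ n * (y - 1) = 1`. Bernoulli's inequality
`y ^ n ≥ 1 + n (y - 1)` then gives `n (y - 1) ^ 2 ≤ 1`, so `0 < x_d - 1 ≤ 1 / √(d - 1)`.
-/

open Filter Topology

theorem natCast_mul_sub_one_sq_le_one {y : ℝ} (hy : 1 ≤ y) {n : ℕ}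
    (h : y ^ n * (y - 1) = 1) : n * (y - 1) ^ 2 ≤ 1 := by
  have bernoulli : 1 + n * (y - 1) ≤ y ^ n := one_add_mul_sub_le_pow (by linarith) n
  nlinarith [mul_le_mul_of_nonneg_right bernoulli (sub_nonneg.2 hy)]

/-- If for each `d ≥ 2`, `x d` is the (unique) root of `x^d - x^(d-1) - 1` in `(1, ∞)`,
then `x d → 1` as `d → ∞`. -/
theorem root_tendsto_one (x : ℕ → ℝ)
    (hx : ∀ d : ℕ, 2 ≤ d → 1 < x d ∧ (x d) ^ d - (x d) ^ (d - 1) - 1 = 0) :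
    Filter.Tendsto x Filter.atTop (nhds 1) := by
  rw [← tendsto_add_atTop_iff_nat 1, tendsto_iff_norm_sub_tendsto_zero]
  have hsq : ∀ n : ℕ, 1 ≤ n → (x (n + 1) - 1) ^ 2 ≤ 1 / n := fun n hn ↦ by
    obtain ⟨hgt, hroot⟩ := hx (n + 1) (by omega)
    rw [Nat.add_sub_cancel] at hroot
    have hbound := natCast_mul_sub_one_sq_le_one hgt.le (by linear_combination hroot)
    rw [le_div_iff₀ (by exact_mod_cast hn)]
    linarith
  have hsq_tendsto : Tendsto (fun n ↦ (x (n + 1) - 1) ^ 2) atTop (𝓝 0) :=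
    squeeze_zero' (.of_forall fun _ ↦ sq_nonneg _) (eventually_atTop.2 ⟨1, hsq⟩)
      tendsto_one_div_atTop_nhds_zero_nat
  simp_rw [Real.norm_eq_abs, ← Real.sqrt_sq_eq_abs]
  simpa using hsq_tendsto.sqrt
end

section
/- Let T be a finite binary rooted tree in which each root-to-leaf path contains at most m left-edges and at most L right-edges. Then the number of leaves of T is at most ∑_{ℓ=0}^{L} C(m+ℓ, ℓ). -/
/-!
The bound `S(m, L) = C(m + L + 1, m + 1)` satisfies Pascal's rule
`S(m - 1, L) + S(m, L - 1) = S(m, L)`, matching the recursion of the leaf count, so it bounds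
the leaves by induction on the tree; the hockey-stick identity rewrites `S(m, L)` as
`∑_{ℓ ≤ L} C(m + ℓ, ℓ)`.
-/

/-- A finite binary rooted tree: a leaf, or an internal node with a left and a right child. -/
inductive BTree where
  | leaf : BTree
  | node (l r : BTree) : BTree

/-- Number of leaves of a binary tree. -/
def BTree.leaves : BTree → ℕ
  | .leaf => 1
  | .node l r => l.leaves + r.leaves

/-- Every root-to-leaf path of the tree uses at most `m` left-edges and at most `L` right-edges. -/
def BTree.Bounded : BTree → ℕ → ℕ → Prop
  | .leaf, _, _ => True
  | .node l r, m, L => 0 < m ∧ 0 < L ∧ BTree.Bounded l (m - 1) L ∧ BTree.Bounded r m (L - 1)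

theorem BTree.Bounded.leaves_le_choose {T : BTree} {m L : ℕ} (h : T.Bounded m L) :
    T.leaves ≤ (m + L + 1).choose (m + 1) := by
  induction T generalizing m L with
  | leaf => exact Nat.choose_pos (by omega)
  | node l r ihl ihr =>
    obtain ⟨hm, hL, hl, hr⟩ := h
    obtain ⟨m, rfl⟩ := Nat.exists_eq_add_one_of_ne_zero hm.ne'
    obtain ⟨L, rfl⟩ := Nat.exists_eq_add_one_of_ne_zero hL.ne'
    calc l.leaves + r.leaves
        ≤ (m + (L + 1) + 1).choose (m + 1) + (m + 1 + L + 1).choose (m + 1 + 1) :=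
          add_le_add (ihl hl) (ihr hr)
      _ = (m + 1 + (L + 1) + 1).choose (m + 1 + 1) := by
          rw [Nat.choose_succ_succ (m + 1 + (L + 1)) (m + 1)]
          congr 2; omega

theorem sum_range_choose_add_left (m L : ℕ) :
    ∑ ℓ ∈ Finset.range (L + 1), (m + ℓ).choose ℓ = (m + L + 1).choose (m + 1) := by
  rw [add_comm m L, ← Nat.sum_range_add_choose L m]
  exact Finset.sum_congr rfl fun ℓ _ => by rw [add_comm, Nat.choose_symm_add]

/-- If each root-to-leaf path of a binary tree contains at most `m` left-edges and at most
`L` right-edges, then the number of leaves is at most `∑_{ℓ=0}^{L} C(m+ℓ, ℓ)`. -/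
theorem leaves_le_sum_choose (T : BTree) (m L : ℕ) (h : T.Bounded m L) :
    T.leaves ≤ ∑ ℓ ∈ Finset.range (L + 1), Nat.choose (m + ℓ) ℓ := by
  rw [sum_range_choose_add_left]
  exact h.leaves_le_choose
end
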